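/- Let (Ω, 𝒫) be a probability space and let Z₁, …, Zₙ : Ω → ℝ be independent random variables, each distributed as a standard Gaussian (mean 0, variance 1). Let μ ∈ ℝⁿ, let L be an n×n real matrix, and define the random vector Δρ(ω) = μ + L·Z(ω). Let b ∈ ℝⁿ with Lᵀb ≠ 0, let a, c ∈ ℝ, let ε ∈ (0,1), and let q ∈ ℝ satisfy Φ(q) = 1 − ε, where Φ is the standard Gaussian cumulative distribution function. Then the chance constraint 𝒫[a + bᵀΔρ ≤ c] ≥ 1 − ε holds if and only if a + bᵀμ + q·‖Lᵀb‖₂ ≤ c, where ‖Lᵀb‖₂ = √(Σⱼ (Σᵢ bᵢ·Lᵢⱼ)²). -/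

import Mathlib

/-!
By `dotProduct_mulVec`, `bᵀΔρ = bᵀμ + ∑ⱼ wⱼ Zⱼ` with `w = Lᵀb`, and a linear combination of
independent standard Gaussians is the centred Gaussian of variance `‖w‖₂²`. Hence the probability
of the event is `Φ((c - a - bᵀμ) / ‖w‖₂)`, and since `Φ` is strictly increasing, comparing it
with `1 - ε = Φ(q)` amounts to comparing the argument with `q`.
-/

open ProbabilityTheory MeasureTheory Finset

open scoped NNReal

namespace ProbabilityTheory

variable {Ω : Type*} [MeasurableSpace Ω] {P : Measure Ω} [IsProbabilityMeasure P]

lemma map_finsetSum_eq_gaussianReal {ι : Type*} {Y : ι → Ω → ℝ}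
    (hY_meas : ∀ i, Measurable (Y i)) (hY_indep : iIndepFun Y P) {m : ι → ℝ} {v : ι → ℝ≥0}
    (hY : ∀ i, P.map (Y i) = gaussianReal (m i) (v i)) (s : Finset ι) :
    P.map (∑ i ∈ s, Y i) = gaussianReal (∑ i ∈ s, m i) (∑ i ∈ s, v i) := by
  classical
  induction s using Finset.induction_on with
  | empty => simp [gaussianReal_zero_var, Pi.zero_def]
  | insert i s hi ih =>
    rw [sum_insert hi, sum_insert hi, sum_insert hi, add_comm (Y i),
      add_comm (m i), add_comm (v i)]
    exact gaussianReal_add_gaussianReal_of_indepFun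
      (hY_indep.indepFun_finsetSum_of_notMem hY_meas hi) ih (hY i)

lemma map_sum_mul_eq_gaussianReal {ι : Type*} [Fintype ι] {Z : ι → Ω → ℝ}
    (hZ_meas : ∀ i, Measurable (Z i)) (hZ_indep : iIndepFun Z P) {m : ι → ℝ} {v : ι → ℝ≥0}
    (hZ : ∀ i, P.map (Z i) = gaussianReal (m i) (v i)) (w : ι → ℝ) :
    P.map (fun ω ↦ ∑ i, w i * Z i ω)
      = gaussianReal (∑ i, w i * m i) (∑ i, .mk (w i ^ 2) (sq_nonneg _) * v i) := by
  have h := map_finsetSum_eq_gaussianReal (Y := fun i ω ↦ w i * Z i ω)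
    (fun i ↦ (hZ_meas i).const_mul _)
    (hZ_indep.comp (fun i x ↦ w i * x) fun i ↦ measurable_const_mul _)
    (fun i ↦ by
      rw [← Function.comp_def, ← Measure.map_map (measurable_const_mul _) (hZ_meas i), hZ i,
        gaussianReal_map_const_mul])
    univ
  simpa only [sum_fn] using h

lemma cdf_gaussianReal (m : ℝ) {v : ℝ≥0} (hv : v ≠ 0) (t : ℝ) :
    cdf (gaussianReal m v) t = cdf (gaussianReal 0 1) ((t - m) / √v) := by
  have hσ : 0 < √(v : ℝ) := Real.sqrt_pos.mpr (NNReal.coe_pos.mpr (pos_iff_ne_zero.mpr hv))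
  have hstd : (gaussianReal m v).map (fun x ↦ (x - m) / √v) = gaussianReal 0 1 := by
    rw [← Function.comp_def (· / √v) (· - m), ← Measure.map_map (by fun_prop) (by fun_prop),
      gaussianReal_map_sub_const, gaussianReal_map_div_const, sub_self, zero_div]
    congr
    ext
    simp [Real.sq_sqrt, hv]
  have hpre : (fun x ↦ (x - m) / √v) ⁻¹' Set.Iic ((t - m) / √v) = Set.Iic t := by
    ext x
    simp [div_le_div_iff_of_pos_right hσ]
  rw [cdf_eq_real, cdf_eq_real, ← hstd, measureReal_def, measureReal_def,
    Measure.map_apply (by fun_prop) measurableSet_Iic, hpre]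

lemma strictMono_cdf_of_absolutelyContinuous {μ : Measure ℝ} [IsProbabilityMeasure μ]
    (h : volume ≪ μ) : StrictMono (cdf μ) := by
  intro x y hxy
  have hIoc : μ (Set.Ioc x y) ≠ 0 := fun h0 ↦ hxy.not_ge (by simpa using h h0)
  rw [← measure_cdf μ, StieltjesFunction.measure_Ioc, ENNReal.ofReal_ne_zero_iff] at hIoc
  linarith

end ProbabilityTheory

theorem gaussian_chance_constraint_multivariate_general
    (n : ℕ) {Ω : Type*} [MeasurableSpace Ω]
    (P : Measure Ω) [IsProbabilityMeasure P]
    (Z : Fin n → Ω → ℝ) (hZmeas : ∀ i, Measurable (Z i))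
    (hZindep : iIndepFun Z P)
    (hZ : ∀ i, P.map (Z i) = gaussianReal 0 1)
    (μ : Fin n → ℝ) (L : Matrix (Fin n) (Fin n) ℝ)
    (b : Fin n → ℝ) (hb : L.vecMul b ≠ 0)
    (a c : ℝ) (ε : ℝ) (q : ℝ)
    (hq : cdf (gaussianReal 0 1) q = 1 - ε) :
    ENNReal.ofReal (1 - ε)
        ≤ P {ω : Ω |
            a + ∑ i, b i * (μ i + L.mulVec (fun j => Z j ω) i) ≤ c}
      ↔ a + ∑ i, b i * μ i
          + q * Real.sqrt (∑ j, (∑ i, b i * L i j) ^ 2) ≤ c := by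
  set w := L.vecMul b
  have hlaw := map_sum_mul_eq_gaussianReal hZmeas hZindep hZ w
  set V : ℝ≥0 := ∑ j, .mk (w j ^ 2) (sq_nonneg _) * 1
  have hV : (V : ℝ) = ∑ j, (∑ i, b i * L i j) ^ 2 := by
    simp [V, w, Matrix.vecMul, dotProduct]
  have hVpos : 0 < (V : ℝ) := by
    obtain ⟨j, hj⟩ := Function.ne_iff.mp hb
    rw [hV]
    exact sum_pos' (fun j _ ↦ sq_nonneg _) ⟨j, mem_univ _, sq_pos_of_ne_zero hj⟩
  have hevent : {ω | a + ∑ i, b i * (μ i + L.mulVec (fun j => Z j ω) i) ≤ c}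
      = (fun ω ↦ ∑ j, w j * Z j ω) ⁻¹' Set.Iic (c - a - ∑ i, b i * μ i) := by
    ext ω
    have hdot := Matrix.dotProduct_mulVec b L (fun j ↦ Z j ω)
    simp only [dotProduct] at hdot
    simp only [mul_add, sum_add_distrib, hdot, Set.mem_ofPred_eq, Set.mem_preimage, Set.mem_Iic]
    constructor <;> intro h <;> linarith
  have hΦ : StrictMono (cdf (gaussianReal 0 1)) :=
    strictMono_cdf_of_absolutelyContinuous (gaussianReal_absolutelyContinuous' 0 one_ne_zero)
  rw [hevent, ← Measure.map_apply (by fun_prop) measurableSet_Iic, hlaw]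
  simp only [mul_zero, sum_const_zero]
  rw [← ofReal_cdf, cdf_gaussianReal 0 (NNReal.coe_pos.mp hVpos).ne',
    ENNReal.ofReal_le_ofReal_iff (cdf_nonneg _ _), ← hq, hΦ.le_iff_le,
    le_div_iff₀ (Real.sqrt_pos.mpr hVpos), hV]
  constructor <;> intro h <;> linarith

/-- Analytical reformulation of a multivariate Gaussian chance constraint: if
`Δρ = μ + L·Z` with `Z₁, …, Zₙ` independent standard Gaussians, `Lᵀb ≠ 0`,
`ε ∈ (0,1)` and `Φ(q) = 1 − ε`, then
`P[a + bᵀΔρ ≤ c] ≥ 1 − ε ↔ a + bᵀμ + q·‖Lᵀb‖₂ ≤ c`. -/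
theorem gaussian_chance_constraint_multivariate
    (n : ℕ) (hn : 0 < n) {Ω : Type*} [MeasurableSpace Ω]
    (P : Measure Ω) [IsProbabilityMeasure P]
    (Z : Fin n → Ω → ℝ) (hZmeas : ∀ i, Measurable (Z i))
    (hZindep : iIndepFun Z P)
    (hZ : ∀ i, P.map (Z i) = gaussianReal 0 1)
    (μ : Fin n → ℝ) (L : Matrix (Fin n) (Fin n) ℝ)
    (b : Fin n → ℝ) (hb : L.vecMul b ≠ 0)
    (a c : ℝ) (ε : ℝ) (hε : ε ∈ Set.Ioo (0 : ℝ) 1) (q : ℝ)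
    (hq : cdf (gaussianReal 0 1) q = 1 - ε) :
    ENNReal.ofReal (1 - ε)
        ≤ P {ω : Ω |
            a + ∑ i, b i * (μ i + L.mulVec (fun j => Z j ω) i) ≤ c}
      ↔ a + ∑ i, b i * μ i
          + q * Real.sqrt (∑ j, (∑ i, b i * L i j) ^ 2) ≤ c :=
  gaussian_chance_constraint_multivariate_general n P Z hZmeas hZindep hZ μ L b hb a c ε q hq
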